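/- For m, n ≥ 2, the number of locally flat-foldable MV-assignments of the m×n Miura-ori equals the number of proper 3-colorings of the m×n grid graph G(m,n) in which one fixed vertex is pre-colored; consequently, 3 times the number of locally flat-foldable MV-assignments of the m×n Miura-ori equals the total number of proper 3-colorings of G(m,n). -/
import Mathlib


namespace Miura

/-- The column of the cell with (0-based) boustrophedon index `k` in a grid with `n`
columns: row `k / n` is traversed left-to-right when it is even, right-to-left when odd. -/
def bCol (n k : ℕ) : ℕ := if (k / n) % 2 = 0 then k % n else n - 1 - k % n

/-- The (0-based) boustrophedon index of the cell in row `i` and column `j`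
of a grid with `n` columns. -/
def bIdx (n i j : ℕ) : ℕ := i * n + (if i % 2 = 0 then j else n - 1 - j)

/-- The creases of the `m × n` Miura-ori, dual to the edges of the `m × n` grid graph:
`vert i j` is the crease V(i,j) separating the horizontally adjacent cells `(i, j)` and
`(i, j+1)`, and `horiz i j` is the crease H(i,j) separating the vertically adjacent cells
`(i, j)` (upper) and `(i+1, j)` (lower). -/
inductive Crease (m n : ℕ) : Type
  | vert  (i j : ℕ) (hi : i < m) (hj : j + 1 < n) : Crease m n
  | horiz (i j : ℕ) (hi : i + 1 < m) (hj : j < n) : Crease m n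

/-- A mountain-valley assignment: every crease gets the value `1` (mountain)
or `-1` (valley). -/
def IsMV {m n : ℕ} (μ : Crease m n → ℤ) : Prop := ∀ e : Crease m n, μ e = 1 ∨ μ e = -1

/-- `μ` is a locally flat-foldable MV-assignment of the `m × n` Miura-ori (with the top
row of crease-pattern vertices "pointing left"): it is an MV-assignment, and at each
interior vertex `w(i,j)`, incident to the creases V(i,j), V(i+1,j), H(i,j), H(i,j+1),
the sum `s` of the four MV-values is `2` or `-2` (Maekawa), and the distinguished crease
`e4` (namely H(i,j) for `i` even, H(i,j+1) for `i` odd) satisfies `μ e4 = s / 2`,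
i.e. `2 * μ e4 = s`. -/
def FlatFoldable {m n : ℕ} (μ : Crease m n → ℤ) : Prop :=
  IsMV μ ∧ ∀ i j : ℕ, ∀ hi : i + 1 < m, ∀ hj : j + 1 < n,
    ((μ (.vert i j (by omega) hj) + μ (.vert (i+1) j hi hj)
        + μ (.horiz i j hi (by omega)) + μ (.horiz i (j+1) hi hj) = 2 ∨
      μ (.vert i j (by omega) hj) + μ (.vert (i+1) j hi hj)
        + μ (.horiz i j hi (by omega)) + μ (.horiz i (j+1) hi hj) = -2) ∧
     2 * μ (if i % 2 = 0 then Crease.horiz i j hi (by omega) else Crease.horiz i (j+1) hi hj)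
       = μ (.vert i j (by omega) hj) + μ (.vert (i+1) j hi hj)
          + μ (.horiz i j hi (by omega)) + μ (.horiz i (j+1) hi hj))

lemma bCol_lt {n : ℕ} (k : ℕ) (hn : 0 < n) : bCol n k < n := by
  unfold bCol
  split
  · exact Nat.mod_lt _ hn
  · omega

lemma rowEnd_lt {m n k : ℕ} (hn : 0 < n) (hk : k + 1 < m * n) (h : (k + 1) % n = 0) :
    k / n + 1 < m := by
  obtain ⟨q, hq⟩ := Nat.dvd_of_mod_eq_zero h
  have hqm : q < m := by
    have h1 : n * q < n * m := by rw [← hq, Nat.mul_comm n m]; exact hk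
    exact Nat.lt_of_mul_lt_mul_left h1
  have h2 : n * (q + 1) ≤ n * m := Nat.mul_le_mul_left n hqm
  rw [Nat.mul_succ] at h2
  rw [← Nat.add_div_right k hn]
  rw [Nat.div_lt_iff_lt_mul hn]
  have h3 : n * q = k + 1 := hq.symm
  nlinarith
lemma mod_succ_lt {n k : ℕ} (hn : 2 ≤ n) (h : (k + 1) % n ≠ 0) : k % n + 1 < n := by
  have h1 : k % n < n := Nat.mod_lt _ (by omega)
  by_contra h2
  apply h
  have h3 : k % n + 1 = n := by omega
  have h4 : (k + 1) % n = (k % n + 1 % n) % n := Nat.add_mod k 1 n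
  have h5 : 1 % n = 1 := Nat.mod_eq_of_lt (by omega)
  rw [h5, h3, Nat.mod_self] at h4
  exact h4

/-- The MV-value of the crease `c_{k+1}` separating the cells `v_k` and `v_{k+1}`
(0-based) of the boustrophedon order, and `0` for an out-of-range index. -/
def stepVal (m n : ℕ) (μ : Crease m n → ℤ) (k : ℕ) : ℤ :=
  if h : 2 ≤ n ∧ k + 1 < m * n then
    if hr : (k + 1) % n = 0 then
      μ (Crease.horiz (k / n) (bCol n k) (rowEnd_lt (by omega) h.2 hr) (bCol_lt k (by omega)))
    else if (k / n) % 2 = 0 then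
      μ (Crease.vert (k / n) (k % n)
          ((Nat.div_lt_iff_lt_mul (by omega)).mpr (by omega))
          (mod_succ_lt h.1 hr))
    else
      μ (Crease.vert (k / n) (n - 2 - k % n)
          ((Nat.div_lt_iff_lt_mul (by omega)).mpr (by omega))
          (by omega))
  else 0

/-- The coloring of the boustrophedon path determined by a MV-assignment `μ`:
`c(v_1) = 0` and `c(v_k) = c(v_{k-1}) + μ(c_k) (mod 3)`, in 0-based indexing. -/
def pathColor (m n : ℕ) (μ : Crease m n → ℤ) : ℕ → ZMod 3
  | 0 => 0
  | k + 1 => pathColor m n μ k + ((stepVal m n μ k : ℤ) : ZMod 3)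

/-- The coloring of the cell in row `i`, column `j` determined by the MV-assignment `μ`
via the boustrophedon recursion. -/
def cellColor (m n : ℕ) (μ : Crease m n → ℤ) (i j : ℕ) : ZMod 3 :=
  pathColor m n μ (bIdx n i j)

/-- `c` is a proper 3-coloring of the cells of the `m × n` grid graph (cells indexed
by `ℕ × ℕ`, in range): cells at distance `|i - i'| + |j - j'| = 1` get different colors. -/
def ProperColoringN (m n : ℕ) (c : ℕ → ℕ → ZMod 3) : Prop :=
  ∀ i j i' j' : ℕ, i < m → j < n → i' < m → j' < n →
    (i - i') + (i' - i) + (j - j') + (j' - j) = 1 → c i j ≠ c i' j'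

/-- `c` is a proper 3-coloring of the `m × n` grid graph on vertex set
`Fin m × Fin n`: vertices at distance `|i - i'| + |j - j'| = 1` get different colors. -/
def ProperColoring (m n : ℕ) (c : Fin m × Fin n → ZMod 3) : Prop :=
  ∀ p q : Fin m × Fin n,
    ((p.1 : ℕ) - (q.1 : ℕ)) + ((q.1 : ℕ) - (p.1 : ℕ))
      + ((p.2 : ℕ) - (q.2 : ℕ)) + ((q.2 : ℕ) - (p.2 : ℕ)) = 1 → c p ≠ c q

/-- `1` if `d = 1`, and `-1` otherwise (so `-1` when `d = 2`); encodes the rule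
"`μ = 1` if the color difference is `1 (mod 3)`, `μ = -1` if it is `2 (mod 3)`". -/
def sgn3 (d : ZMod 3) : ℤ := if d = 1 then 1 else -1

/-- The MV-assignment determined by a coloring `c` of the cells: a path crease gets
value `1` resp. `-1` according as the color difference `c(v_k) - c(v_{k-1})` along the
boustrophedon path is `1` resp. `2 (mod 3)`; a non-path crease H(i,j) gets value `1`
resp. `-1` according as `c(i,j) - c(i+1,j)` is `1` resp. `2 (mod 3)`.  (Every vertical
crease V(i,j) lies on the path: in an even row the path crosses it from `(i,j)` to
`(i,j+1)`, in an odd row from `(i,j+1)` to `(i,j)`.  The crease H(i,j) lies on the path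
exactly when `j` is the last column visited in row `i`, i.e. `j = n - 1` for `i` even
and `j = 0` for `i` odd, in which case the path crosses it from `(i,j)` to `(i+1,j)`.) -/
def muOf (m n : ℕ) (c : ℕ → ℕ → ZMod 3) : Crease m n → ℤ
  | .vert i j _ _ =>
      if i % 2 = 0 then sgn3 (c i (j+1) - c i j) else sgn3 (c i j - c i (j+1))
  | .horiz i j _ _ =>
      if j = (if i % 2 = 0 then n - 1 else 0) then sgn3 (c (i+1) j - c i j)
      else sgn3 (c i j - c (i+1) j)


section Aux
variable {m n : ℕ}

lemma vert_congr {i i' j j' : ℕ} (h1 : i = i') (h2 : j = j') {p q p' q'} :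
    (Crease.vert i j p q : Crease m n) = Crease.vert i' j' p' q' := by subst h1; subst h2; rfl

lemma horiz_congr {i i' j j' : ℕ} (h1 : i = i') (h2 : j = j') {p q p' q'} :
    (Crease.horiz i j p q : Crease m n) = Crease.horiz i' j' p' q' := by subst h1; subst h2; rfl

lemma div_row (hn : 0 < n) {i x : ℕ} (hx : x < n) : (i * n + x) / n = i := by
  rw [mul_comm, Nat.mul_add_div hn, Nat.div_eq_of_lt hx, add_zero]

lemma mod_row (hn : 0 < n) {i x : ℕ} (hx : x < n) : (i * n + x) % n = x := by
  rw [mul_comm, Nat.mul_add_mod, Nat.mod_eq_of_lt hx]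

lemma off_lt {i : ℕ} (hi : i < m) {x : ℕ} (hx : x < n) : i * n + x < m * n := by
  have h2 : (i+1) * n ≤ m * n := Nat.mul_le_mul_right n hi
  have h3 : i * n + x < (i+1) * n := by rw [add_mul, one_mul]; omega
  omega

lemma bIdx_lt {i j : ℕ} (hi : i < m) (hj : j < n) : bIdx n i j < m * n := by
  unfold bIdx; split <;> exact off_lt hi (by omega)

lemma bIdx_div (hn : 0 < n) {i j : ℕ} (hj : j < n) : bIdx n i j / n = i := by
  unfold bIdx; split <;> exact div_row hn (by omega)

lemma bIdx_mod (hn : 0 < n) {i j : ℕ} (hj : j < n) :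
    bIdx n i j % n = if i % 2 = 0 then j else n - 1 - j := by
  unfold bIdx; split <;> exact mod_row hn (by omega)

lemma bCol_bIdx (hn : 0 < n) {i j : ℕ} (hj : j < n) : bCol n (bIdx n i j) = j := by
  unfold bCol
  rw [bIdx_div hn hj, bIdx_mod hn hj]
  rcases Nat.mod_two_eq_zero_or_one i with h | h <;> simp [h] <;> omega

lemma pathColor_succ (μ : Crease m n → ℤ) (k : ℕ) :
    pathColor m n μ (k+1) = pathColor m n μ k + ((stepVal m n μ k : ℤ) : ZMod 3) := rfl

lemma stepVal_vert_even {μ : Crease m n → ℤ} (hn : 2 ≤ n) {i j : ℕ} (hi : i < m)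
    (hp : i % 2 = 0) (hj : j + 1 < n) {p q} :
    stepVal m n μ (i * n + j) = μ (Crease.vert i j p q) := by
  have hk : i * n + j + 1 < m * n := off_lt hi hj
  have hd : (i * n + j) / n = i := div_row (by omega) (by omega)
  have hm : (i * n + j) % n = j := mod_row (by omega) (by omega)
  have h1 : (i * n + j + 1) % n = j + 1 := mod_row (by omega) hj
  have h2 : ¬ ((i * n + j + 1) % n = 0) := by omega
  unfold stepVal
  rw [dif_pos ⟨hn, hk⟩, dif_neg h2]
  rw [if_pos (by rw [hd]; exact hp)]
  exact congrArg μ (vert_congr hd hm)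

lemma stepVal_vert_odd {μ : Crease m n → ℤ} (hn : 2 ≤ n) {i j : ℕ} (hi : i < m)
    (hp : i % 2 = 1) (hj : j + 1 < n) {p q} :
    stepVal m n μ (i * n + (n - 2 - j)) = μ (Crease.vert i j p q) := by
  have hk : i * n + (n - 2 - j) + 1 < m * n := off_lt hi (x := n - 2 - j + 1) (by omega)
  have hd : (i * n + (n - 2 - j)) / n = i := div_row (by omega) (by omega)
  have hm : (i * n + (n - 2 - j)) % n = n - 2 - j := mod_row (by omega) (by omega)
  have h1 : (i * n + (n - 2 - j) + 1) % n = n - 1 - j := by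
    have : i * n + (n - 2 - j) + 1 = i * n + (n - 1 - j) := by omega
    rw [this]; exact mod_row (by omega) (by omega)
  have h2 : ¬ ((i * n + (n - 2 - j) + 1) % n = 0) := by omega
  unfold stepVal
  rw [dif_pos ⟨hn, hk⟩, dif_neg h2]
  rw [if_neg (by rw [hd]; omega)]
  exact congrArg μ (vert_congr hd (by rw [hm]; omega))

lemma stepVal_horiz {μ : Crease m n → ℤ} (hn : 2 ≤ n) {i b : ℕ} (hi : i + 1 < m)
    (hb : b = if i % 2 = 0 then n - 1 else 0) {p q} :
    stepVal m n μ (i * n + (n - 1)) = μ (Crease.horiz i b p q) := by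
  have h0 : i * n + (n - 1) + 1 = (i + 1) * n := by rw [add_mul, one_mul]; omega
  have hk : i * n + (n - 1) + 1 < m * n := by
    have := off_lt (m := m) (n := n) hi (x := 0) (by omega)
    omega
  have hd : (i * n + (n - 1)) / n = i := div_row (by omega) (by omega)
  have hm : (i * n + (n - 1)) % n = n - 1 := mod_row (by omega) (by omega)
  have h1 : (i * n + (n - 1) + 1) % n = 0 := by rw [h0]; exact Nat.mul_mod_left _ _
  unfold stepVal
  rw [dif_pos ⟨hn, hk⟩, dif_pos h1]
  refine congrArg μ (horiz_congr hd ?_)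
  unfold bCol
  rw [hd, hm, hb]
  rcases Nat.mod_two_eq_zero_or_one i with h | h <;> simp [h] <;> omega

end Aux

section Aux2
variable {m n : ℕ}

lemma cellColor_right {μ : Crease m n → ℤ} (hn : 2 ≤ n) {i j : ℕ} (hi : i < m)
    (hp : i % 2 = 0) (hj : j + 1 < n) {p q} :
    cellColor m n μ i (j+1) = cellColor m n μ i j + ((μ (Crease.vert i j p q) : ℤ) : ZMod 3) := by
  have h1 : bIdx n i (j+1) = i * n + j + 1 := by unfold bIdx; rw [if_pos hp]; omega
  have h2 : bIdx n i j = i * n + j := by unfold bIdx; rw [if_pos hp]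
  unfold cellColor
  rw [h1, h2, pathColor_succ, stepVal_vert_even hn hi hp hj]

lemma cellColor_left {μ : Crease m n → ℤ} (hn : 2 ≤ n) {i j : ℕ} (hi : i < m)
    (hp : i % 2 = 1) (hj : j + 1 < n) {p q} :
    cellColor m n μ i j = cellColor m n μ i (j+1) + ((μ (Crease.vert i j p q) : ℤ) : ZMod 3) := by
  have h1 : bIdx n i j = i * n + (n - 2 - j) + 1 := by unfold bIdx; rw [if_neg (by omega)]; omega
  have h2 : bIdx n i (j+1) = i * n + (n - 2 - j) := by unfold bIdx; rw [if_neg (by omega)]; omega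
  unfold cellColor
  rw [h1, h2, pathColor_succ, stepVal_vert_odd hn hi hp hj]

lemma cellColor_down_even {μ : Crease m n → ℤ} (hn : 2 ≤ n) {i : ℕ} (hi : i + 1 < m)
    (hp : i % 2 = 0) {p q} :
    cellColor m n μ (i+1) (n-1)
      = cellColor m n μ i (n-1) + ((μ (Crease.horiz i (n-1) p q) : ℤ) : ZMod 3) := by
  have h1 : bIdx n (i+1) (n-1) = i * n + (n-1) + 1 := by
    unfold bIdx; rw [if_neg (by omega)]
    have : n - 1 - (n - 1) = 0 := by omega
    rw [this, add_mul, one_mul]; omega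
  have h2 : bIdx n i (n-1) = i * n + (n-1) := by unfold bIdx; rw [if_pos hp]
  unfold cellColor
  rw [h1, h2, pathColor_succ, stepVal_horiz hn hi (by rw [if_pos hp])]

lemma cellColor_down_odd {μ : Crease m n → ℤ} (hn : 2 ≤ n) {i : ℕ} (hi : i + 1 < m)
    (hp : i % 2 = 1) {p q} :
    cellColor m n μ (i+1) 0
      = cellColor m n μ i 0 + ((μ (Crease.horiz i 0 p q) : ℤ) : ZMod 3) := by
  have h1 : bIdx n (i+1) 0 = i * n + (n-1) + 1 := by
    unfold bIdx; rw [if_pos (by omega)]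
    rw [add_mul, one_mul]; omega
  have h2 : bIdx n i 0 = i * n + (n-1) := by unfold bIdx; rw [if_neg (by omega)]; omega
  unfold cellColor
  rw [h1, h2, pathColor_succ, stepVal_horiz hn hi (by rw [if_neg (by omega)])]

/-- The vertex relation over ℤ, even rows. -/
lemma ff_vertex_even {μ : Crease m n → ℤ} (hF : FlatFoldable μ) {i j : ℕ}
    (hi : i + 1 < m) (hj : j + 1 < n) (hp : i % 2 = 0) {p1 q1 p2 q2 p3 q3 p4 q4} :
    μ (Crease.horiz i j p1 q1)
      = μ (Crease.vert i j p2 q2) + μ (Crease.vert (i+1) j p3 q3)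
        + μ (Crease.horiz i (j+1) p4 q4) := by
  have h := (hF.2 i j hi hj).2
  rw [if_pos hp] at h
  omega

/-- The vertex relation over ℤ, odd rows. -/
lemma ff_vertex_odd {μ : Crease m n → ℤ} (hF : FlatFoldable μ) {i j : ℕ}
    (hi : i + 1 < m) (hj : j + 1 < n) (hp : i % 2 = 1) {p1 q1 p2 q2 p3 q3 p4 q4} :
    μ (Crease.horiz i (j+1) p1 q1)
      = μ (Crease.vert i j p2 q2) + μ (Crease.vert (i+1) j p3 q3)
        + μ (Crease.horiz i j p4 q4) := by
  have h := (hF.2 i j hi hj).2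
  rw [if_neg (by omega)] at h
  omega

/-- The key invariant: the color difference across any horizontal crease is `μ(H(i,j))`. -/
lemma cellColor_delta {μ : Crease m n → ℤ} (hn : 2 ≤ n) (hF : FlatFoldable μ) :
    ∀ i j : ℕ, ∀ hi : i + 1 < m, ∀ hj : j < n,
      cellColor m n μ (i+1) j
        = cellColor m n μ i j + ((μ (Crease.horiz i j hi hj) : ℤ) : ZMod 3) := by
  intro i j hi hj
  rcases Nat.mod_two_eq_zero_or_one i with hp | hp
  · -- even row: downward induction on n - 1 - j
    suffices key : ∀ d j, j < n → n - 1 - j = d →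
        ∀ hj' : j < n, cellColor m n μ (i+1) j
          = cellColor m n μ i j + ((μ (Crease.horiz i j hi hj') : ℤ) : ZMod 3) by
      exact key (n - 1 - j) j hj rfl hj
    intro d
    induction d with
    | zero =>
      intro j hjn hd hj'
      have : j = n - 1 := by omega
      subst this
      exact cellColor_down_even hn hi hp
    | succ d IH =>
      intro j hjn hd hj'
      have hj1 : j + 1 < n := by omega
      have hIH := IH (j+1) hj1 (by omega) hj1
      have hA : cellColor m n μ (i+1) j
          = cellColor m n μ (i+1) (j+1) + ((μ (Crease.vert (i+1) j hi hj1) : ℤ) : ZMod 3) :=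
        cellColor_left hn (by omega) (by omega) hj1
      have hB : cellColor m n μ i (j+1)
          = cellColor m n μ i j + ((μ (Crease.vert i j (by omega) hj1) : ℤ) : ZMod 3) :=
        cellColor_right hn (by omega) hp hj1
      have hz := ff_vertex_even hF hi hj1 hp
        (p1 := hi) (q1 := by omega) (p2 := by omega) (q2 := hj1)
        (p3 := hi) (q3 := hj1) (p4 := hi) (q4 := hj1)
      rw [hA, hIH, hB, hz]
      push_cast
      ring
  · -- odd row: upward induction on j
    suffices key : ∀ j, j < n →
        ∀ hj' : j < n, cellColor m n μ (i+1) j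
          = cellColor m n μ i j + ((μ (Crease.horiz i j hi hj') : ℤ) : ZMod 3) by
      exact key j hj hj
    intro j
    induction j with
    | zero =>
      intro hjn hj'
      exact cellColor_down_odd hn hi hp
    | succ j IH =>
      intro hjn hj'
      have hj1 : j + 1 < n := hjn
      have hIH := IH (by omega) (by omega)
      have hA : cellColor m n μ i j
          = cellColor m n μ i (j+1) + ((μ (Crease.vert i j (by omega) hj1) : ℤ) : ZMod 3) :=
        cellColor_left hn (by omega) hp hj1
      have hB : cellColor m n μ (i+1) (j+1)
          = cellColor m n μ (i+1) j + ((μ (Crease.vert (i+1) j hi hj1) : ℤ) : ZMod 3) :=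
        cellColor_right hn (by omega) (by omega) hj1
      have hz := ff_vertex_odd hF hi hj1 hp
        (p1 := hi) (q1 := hjn) (p2 := by omega) (q2 := hj1)
        (p3 := hi) (q3 := hj1) (p4 := hi) (q4 := by omega)
      rw [hB, hIH, hz]
      have : cellColor m n μ i (j+1)
          = cellColor m n μ i j - ((μ (Crease.vert i j (by omega) hj1) : ℤ) : ZMod 3) := by
        rw [hA]; ring
      rw [this]
      push_cast
      ring

end Aux2

section Aux3
variable {m n : ℕ}

lemma mv_cast_ne {x : ℤ} (h : x = 1 ∨ x = -1) : ((x : ℤ) : ZMod 3) ≠ 0 := by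
  rcases h with rfl | rfl <;> decide

lemma cellColor_ne_right {μ : Crease m n → ℤ} (hn : 2 ≤ n) (hF : FlatFoldable μ)
    {i j : ℕ} (hi : i < m) (hj : j + 1 < n) :
    cellColor m n μ i j ≠ cellColor m n μ i (j+1) := by
  rcases Nat.mod_two_eq_zero_or_one i with hp | hp
  · rw [cellColor_right hn hi hp hj (p := hi) (q := hj)]
    intro h
    have h0 : ((μ (Crease.vert i j hi hj) : ℤ) : ZMod 3) = 0 := by linear_combination -h
    exact mv_cast_ne (hF.1 _) h0
  · rw [cellColor_left hn hi hp hj (p := hi) (q := hj)]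
    intro h
    have h0 : ((μ (Crease.vert i j hi hj) : ℤ) : ZMod 3) = 0 := by linear_combination h
    exact mv_cast_ne (hF.1 _) h0

lemma cellColor_ne_down {μ : Crease m n → ℤ} (hn : 2 ≤ n) (hF : FlatFoldable μ)
    {i j : ℕ} (hi : i + 1 < m) (hj : j < n) :
    cellColor m n μ i j ≠ cellColor m n μ (i+1) j := by
  rw [cellColor_delta hn hF i j hi hj]
  intro h
  have h0 : ((μ (Crease.horiz i j hi hj) : ℤ) : ZMod 3) = 0 := by linear_combination -h
  exact mv_cast_ne (hF.1 _) h0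

lemma proper_cellColor {μ : Crease m n → ℤ} (hn : 2 ≤ n) (hF : FlatFoldable μ) :
    ProperColoringN m n (cellColor m n μ) := by
  intro i j i' j' hi hj hi' hj' hadj
  rcases (by omega :
      (i' = i + 1 ∧ j' = j) ∨ (i = i' + 1 ∧ j = j') ∨
      (i' = i ∧ j' = j + 1) ∨ (i = i' ∧ j = j' + 1)) with
    ⟨rfl, rfl⟩ | ⟨rfl, rfl⟩ | ⟨rfl, rfl⟩ | ⟨rfl, rfl⟩
  · exact cellColor_ne_down hn hF (by omega) (by omega)
  · exact (cellColor_ne_down hn hF (by omega) (by omega)).symm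
  · exact cellColor_ne_right hn hF (by omega) (by omega)
  · exact (cellColor_ne_right hn hF (by omega) (by omega)).symm

lemma sgn3_mv (d : ZMod 3) : sgn3 d = 1 ∨ sgn3 d = -1 := by
  unfold sgn3; split <;> simp

lemma sgn3_cast : ∀ {d : ZMod 3}, d ≠ 0 → ((sgn3 d : ℤ) : ZMod 3) = d := by
  decide

lemma sgn3_of_cast {x : ℤ} (h : x = 1 ∨ x = -1) : sgn3 ((x : ℤ) : ZMod 3) = x := by
  rcases h with rfl | rfl <;> decide

/-- The corrected MV-assignment determined by a coloring. -/
def muC (m n : ℕ) (c : ℕ → ℕ → ZMod 3) : Crease m n → ℤ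
  | .vert i j _ _ =>
      if i % 2 = 0 then sgn3 (c i (j+1) - c i j) else sgn3 (c i j - c i (j+1))
  | .horiz i j _ _ => sgn3 (c (i+1) j - c i j)

lemma muC_vert_even {c : ℕ → ℕ → ZMod 3} {i j : ℕ} (hp : i % 2 = 0) {p q} :
    muC m n c (Crease.vert i j p q) = sgn3 (c i (j+1) - c i j) := by
  simp only [muC, if_pos hp]

lemma muC_vert_odd {c : ℕ → ℕ → ZMod 3} {i j : ℕ} (hp : i % 2 = 1) {p q} :
    muC m n c (Crease.vert i j p q) = sgn3 (c i j - c i (j+1)) := by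
  simp only [muC]
  rw [if_neg (by omega)]

lemma muC_horiz {c : ℕ → ℕ → ZMod 3} {i j : ℕ} {p q} :
    muC m n c (Crease.horiz i j p q) = sgn3 (c (i+1) j - c i j) := rfl

lemma muC_isMV (c : ℕ → ℕ → ZMod 3) : IsMV (muC m n c) := by
  intro e
  cases e with
  | vert i j p q =>
    rcases Nat.mod_two_eq_zero_or_one i with hp | hp
    · rw [muC_vert_even hp]; exact sgn3_mv _
    · rw [muC_vert_odd hp]; exact sgn3_mv _
  | horiz i j p q => rw [muC_horiz]; exact sgn3_mv _

lemma lift3 {x y z w : ℤ} (hx : x = 1 ∨ x = -1) (hy : y = 1 ∨ y = -1)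
    (hz : z = 1 ∨ z = -1) (hw : w = 1 ∨ w = -1)
    (h : ((x : ℤ) : ZMod 3) = ((y : ℤ) : ZMod 3) + ((z : ℤ) : ZMod 3) + ((w : ℤ) : ZMod 3)) :
    x = y + z + w := by
  rcases hx with rfl | rfl <;> rcases hy with rfl | rfl <;> rcases hz with rfl | rfl <;>
    rcases hw with rfl | rfl <;> revert h <;> decide

lemma final_arith {x y z w : ℤ} (hx : x = 1 ∨ x = -1) (hy : y = 1 ∨ y = -1)
    (hz : z = 1 ∨ z = -1) (hw : w = 1 ∨ w = -1) (hZ : x = y + z + w) :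
    (y + z + x + w = 2 ∨ y + z + x + w = -2) ∧ 2 * x = y + z + x + w := by
  rcases hx with rfl | rfl <;> rcases hy with rfl | rfl <;> rcases hz with rfl | rfl <;>
    rcases hw with rfl | rfl <;> exact ⟨by omega, by omega⟩

lemma muC_flatFoldable (hn : 2 ≤ n) {c : ℕ → ℕ → ZMod 3} (hc : ProperColoringN m n c) :
    FlatFoldable (muC m n c) := by
  refine ⟨muC_isMV c, ?_⟩
  intro i j hi hj
  have him : i < m := by omega
  have hjn : j < n := by omega
  have d1 : c (i+1) j - c i j ≠ 0 :=
    sub_ne_zero.mpr (Ne.symm (hc i j (i+1) j him hjn hi hjn (by omega)))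
  have d2 : c (i+1) (j+1) - c i (j+1) ≠ 0 :=
    sub_ne_zero.mpr (Ne.symm (hc i (j+1) (i+1) (j+1) him hj hi hj (by omega)))
  have d3 : c i (j+1) - c i j ≠ 0 :=
    sub_ne_zero.mpr (Ne.symm (hc i j i (j+1) him hjn him hj (by omega)))
  have d3' : c i j - c i (j+1) ≠ 0 :=
    sub_ne_zero.mpr (hc i j i (j+1) him hjn him hj (by omega))
  have d4 : c (i+1) (j+1) - c (i+1) j ≠ 0 :=
    sub_ne_zero.mpr (Ne.symm (hc (i+1) j (i+1) (j+1) hi hjn hi hj (by omega)))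
  have d4' : c (i+1) j - c (i+1) (j+1) ≠ 0 :=
    sub_ne_zero.mpr (hc (i+1) j (i+1) (j+1) hi hjn hi hj (by omega))
  rcases Nat.mod_two_eq_zero_or_one i with hp | hp
  · rw [if_pos hp]
    refine final_arith (muC_isMV c _) (muC_isMV c _) (muC_isMV c _) (muC_isMV c _) ?_
    refine lift3 (muC_isMV c _) (muC_isMV c _) (muC_isMV c _) (muC_isMV c _) ?_
    rw [muC_horiz, muC_horiz, muC_vert_even hp, muC_vert_odd (by omega : (i+1) % 2 = 1),
      sgn3_cast d1, sgn3_cast d3, sgn3_cast d4', sgn3_cast d2]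
    ring
  · rw [if_neg (by omega)]
    have hgoal :
        (muC m n c (Crease.vert i j (by omega) hj) + muC m n c (Crease.vert (i+1) j hi hj)
          + muC m n c (Crease.horiz i j hi (by omega)) + muC m n c (Crease.horiz i (j+1) hi hj) = 2 ∨
        muC m n c (Crease.vert i j (by omega) hj) + muC m n c (Crease.vert (i+1) j hi hj)
          + muC m n c (Crease.horiz i j hi (by omega)) + muC m n c (Crease.horiz i (j+1) hi hj) = -2) ∧
        2 * muC m n c (Crease.horiz i (j+1) hi hj)
          = muC m n c (Crease.vert i j (by omega) hj) + muC m n c (Crease.vert (i+1) j hi hj)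
          + muC m n c (Crease.horiz i j hi (by omega)) + muC m n c (Crease.horiz i (j+1) hi hj) := by
      have hZ : muC m n c (Crease.horiz i (j+1) hi hj)
          = muC m n c (Crease.vert i j (by omega) hj) + muC m n c (Crease.vert (i+1) j hi hj)
            + muC m n c (Crease.horiz i j hi (by omega)) := by
        refine lift3 (muC_isMV c _) (muC_isMV c _) (muC_isMV c _) (muC_isMV c _) ?_
        rw [muC_horiz, muC_horiz, muC_vert_odd hp, muC_vert_even (by omega : (i+1) % 2 = 0),
          sgn3_cast d2, sgn3_cast d3', sgn3_cast d4, sgn3_cast d1]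
        ring
      have h1 := muC_isMV c (Crease.vert i j (show i < m by omega) hj)
      have h2 := muC_isMV c (Crease.vert (i+1) j hi hj)
      have h3 := muC_isMV c (Crease.horiz i j hi (show j < n by omega))
      have h4 := muC_isMV c (Crease.horiz i (j+1) hi hj)
      rcases h1 with h1 | h1 <;> rcases h2 with h2 | h2 <;> rcases h3 with h3 | h3 <;>
        rcases h4 with h4 | h4 <;> exact ⟨by omega, by omega⟩
    exact hgoal

end Aux3

section Aux4
variable {m n : ℕ}

lemma muC_cellColor (hn : 2 ≤ n) {μ : Crease m n → ℤ} (hF : FlatFoldable μ) :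
    muC m n (cellColor m n μ) = μ := by
  funext e
  cases e with
  | vert i j hi hj =>
    rcases Nat.mod_two_eq_zero_or_one i with hp | hp
    · rw [muC_vert_even hp, cellColor_right hn hi hp hj (p := hi) (q := hj),
        add_sub_cancel_left]
      exact sgn3_of_cast (hF.1 _)
    · rw [muC_vert_odd hp, cellColor_left hn hi hp hj (p := hi) (q := hj),
        add_sub_cancel_left]
      exact sgn3_of_cast (hF.1 _)
  | horiz i j hi hj =>
    rw [muC_horiz, cellColor_delta hn hF i j hi hj, add_sub_cancel_left]
    exact sgn3_of_cast (hF.1 _)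

lemma muC_congr {c c' : ℕ → ℕ → ZMod 3} (h : ∀ i j, i < m → j < n → c i j = c' i j) :
    muC m n c = muC m n c' := by
  funext e
  cases e with
  | vert i j p q =>
    rcases Nat.mod_two_eq_zero_or_one i with hp | hp
    · rw [muC_vert_even hp, muC_vert_even hp, h i (j+1) p q, h i j p (by omega)]
    · rw [muC_vert_odd hp, muC_vert_odd hp, h i (j+1) p q, h i j p (by omega)]
  | horiz i j p q =>
    rw [muC_horiz, muC_horiz, h (i+1) j p q, h i j (by omega) q]

lemma pathColor_muC (hn : 2 ≤ n) {c : ℕ → ℕ → ZMod 3} (hc : ProperColoringN m n c)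
    (h0 : c 0 0 = 0) :
    ∀ k, k < m * n → pathColor m n (muC m n c) k = c (k / n) (bCol n k) := by
  intro k
  induction k with
  | zero =>
    intro _
    have h1 : 0 / n = 0 := Nat.zero_div n
    have h2 : bCol n 0 = 0 := by unfold bCol; rw [h1]; simp
    rw [h1, h2, h0]
    rfl
  | succ k IH =>
    intro hk1
    have hk : k < m * n := by omega
    have hi : k / n < m := (Nat.div_lt_iff_lt_mul (by omega)).mpr hk
    have hrn : k % n < n := Nat.mod_lt _ (by omega)
    have hdm : n * (k / n) + k % n = k := Nat.div_add_mod k n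
    rw [pathColor_succ, IH hk]
    by_cases hr : (k + 1) % n = 0
    · -- row end
      have hadd : (k + 1) % n = (k % n + 1) % n := by
        conv_lhs => rw [← hdm]
        rw [Nat.add_assoc, Nat.mul_add_mod]
      have hrr : k % n = n - 1 := by
        by_contra hcon
        have hlt : k % n + 1 < n := by omega
        rw [hadd, Nat.mod_eq_of_lt hlt] at hr
        omega
      have hkeq : k = (k / n) * n + (n - 1) := by rw [mul_comm]; omega
      have hi1 : k / n + 1 < m := rowEnd_lt (by omega) hk1 hr
      have hdiv1 : (k+1) / n = k / n + 1 := by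
        have h5 : k + 1 = (k / n + 1) * n := by rw [add_mul, one_mul, mul_comm]; omega
        rw [h5, Nat.mul_div_cancel _ (by omega)]
      have hb : bCol n k = if (k / n) % 2 = 0 then n - 1 else 0 := by
        unfold bCol
        rw [hrr]
        split <;> omega
      have hblt : bCol n k < n := bCol_lt k (by omega)
      have hb1 : bCol n (k+1) = bCol n k := by
        rw [hb]
        unfold bCol
        rw [hdiv1, hr]
        rcases Nat.mod_two_eq_zero_or_one (k / n) with hq | hq
        · rw [if_neg (by omega), if_pos hq]; omega
        · rw [if_pos (by omega), if_neg (by omega)]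
      have hstep : stepVal m n (muC m n c) k
          = muC m n c (Crease.horiz (k / n) (bCol n k) hi1 hblt) := by
        conv_lhs => rw [hkeq]
        exact stepVal_horiz hn hi1 hb
      have dne : c (k / n + 1) (bCol n k) - c (k / n) (bCol n k) ≠ 0 :=
        sub_ne_zero.mpr (Ne.symm (hc (k / n) (bCol n k) (k / n + 1) (bCol n k)
          (by omega) hblt hi1 hblt (by omega)))
      rw [hdiv1, hb1, hstep, muC_horiz, sgn3_cast dne]
      ring
    · -- within a row
      have hlt : k % n + 1 < n := mod_succ_lt hn hr
      have hkeq : k = (k / n) * n + k % n := by rw [mul_comm]; omega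
      have hk1eq : k + 1 = (k / n) * n + (k % n + 1) := by omega
      have hdiv : (k+1) / n = k / n := by rw [hk1eq, div_row (by omega) hlt]
      have hmod1 : (k+1) % n = k % n + 1 := by rw [hk1eq, mod_row (by omega) hlt]
      rcases Nat.mod_two_eq_zero_or_one (k / n) with hq | hq
      · have hbk : bCol n k = k % n := by unfold bCol; rw [if_pos hq]
        have hbk1 : bCol n (k+1) = k % n + 1 := by
          unfold bCol; rw [hdiv, if_pos hq, hmod1]
        have hstep : stepVal m n (muC m n c) k
            = muC m n c (Crease.vert (k / n) (k % n) hi hlt) := by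
          conv_lhs => rw [hkeq]
          exact stepVal_vert_even hn hi hq hlt
        have dne : c (k / n) (k % n + 1) - c (k / n) (k % n) ≠ 0 :=
          sub_ne_zero.mpr (Ne.symm (hc (k / n) (k % n) (k / n) (k % n + 1)
            hi (by omega) hi hlt (by omega)))
        rw [hdiv, hbk1, hbk, hstep, muC_vert_even hq, sgn3_cast dne]
        ring
      · have hbk : bCol n k = n - 1 - k % n := by
          unfold bCol; rw [if_neg (by omega)]
        have hbk1 : bCol n (k+1) = n - 2 - k % n := by
          unfold bCol; rw [hdiv, if_neg (by omega), hmod1]; omega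
        have hj2 : (n - 2 - k % n) + 1 < n := by omega
        have hstep : stepVal m n (muC m n c) k
            = muC m n c (Crease.vert (k / n) (n - 2 - k % n) hi hj2) := by
          conv_lhs => rw [show k = (k / n) * n + (n - 2 - (n - 2 - k % n)) by omega]
          exact stepVal_vert_odd hn hi hq hj2
        have hcol : n - 2 - k % n + 1 = n - 1 - k % n := by omega
        have dne : c (k / n) (n - 2 - k % n) - c (k / n) (n - 1 - k % n) ≠ 0 :=
          sub_ne_zero.mpr (hc (k / n) (n - 2 - k % n) (k / n) (n - 1 - k % n)
            hi (by omega) hi (by omega) (by omega))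
        rw [hdiv, hbk1, hbk, hstep, muC_vert_odd hq, hcol, sgn3_cast dne]
        ring

lemma cellColor_muC (hn : 2 ≤ n) {c : ℕ → ℕ → ZMod 3} (hc : ProperColoringN m n c)
    (h0 : c 0 0 = 0) {i j : ℕ} (hi : i < m) (hj : j < n) :
    cellColor m n (muC m n c) i j = c i j := by
  unfold cellColor
  rw [pathColor_muC hn hc h0 (bIdx n i j) (bIdx_lt hi hj),
    bIdx_div (by omega) hj, bCol_bIdx (by omega) hj]

end Aux4

section Main
variable {m n : ℕ}

/-- Extension of a coloring on `Fin m × Fin n` to `ℕ × ℕ` (junk value out of range). -/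
def nColor (m n : ℕ) (c : Fin m × Fin n → ZMod 3) (i j : ℕ) : ZMod 3 :=
  if h : i < m ∧ j < n then c (⟨i, h.1⟩, ⟨j, h.2⟩) else 0

lemma nColor_proper {c : Fin m × Fin n → ZMod 3} (hc : ProperColoring m n c) :
    ProperColoringN m n (nColor m n c) := by
  intro i j i' j' hi hj hi' hj' hadj
  unfold nColor
  rw [dif_pos ⟨hi, hj⟩, dif_pos ⟨hi', hj'⟩]
  exact hc (⟨i, hi⟩, ⟨j, hj⟩) (⟨i', hi'⟩, ⟨j', hj'⟩) hadj

lemma card_ff_eq (hm : 2 ≤ m) (hn : 2 ≤ n) :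
    Nat.card {μ : Crease m n → ℤ // FlatFoldable μ}
      = Nat.card {c : Fin m × Fin n → ZMod 3 //
          ProperColoring m n c ∧ c (⟨0, by omega⟩, ⟨0, by omega⟩) = 0} := by
  apply Nat.card_congr
  refine ⟨?_, ?_, ?_, ?_⟩
  · rintro ⟨μ, hF⟩
    refine ⟨fun p => cellColor m n μ p.1 p.2, ?_, ?_⟩
    · intro p q hadj
      exact proper_cellColor hn hF p.1 p.2 q.1 q.2 p.1.isLt p.2.isLt q.1.isLt q.2.isLt hadj
    · show cellColor m n μ 0 0 = 0
      unfold cellColor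
      rw [show bIdx n 0 0 = 0 by unfold bIdx; simp]
      rfl
  · rintro ⟨c, hc, h0⟩
    exact ⟨muC m n (nColor m n c), muC_flatFoldable hn (nColor_proper hc)⟩
  · rintro ⟨μ, hF⟩
    apply Subtype.ext
    show muC m n (nColor m n (fun p => cellColor m n μ p.1 p.2)) = μ
    rw [muC_congr (c' := cellColor m n μ) (fun i j hi hj => by
      unfold nColor; rw [dif_pos ⟨hi, hj⟩])]
    exact muC_cellColor hn hF
  · rintro ⟨c, hc, h0⟩
    apply Subtype.ext
    funext p
    show cellColor m n (muC m n (nColor m n c)) p.1 p.2 = c p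
    have h00 : nColor m n c 0 0 = 0 := by
      unfold nColor
      rw [dif_pos ⟨by omega, by omega⟩]
      exact h0
    rw [cellColor_muC hn (nColor_proper hc) h00 p.1.isLt p.2.isLt]
    unfold nColor
    rw [dif_pos ⟨p.1.isLt, p.2.isLt⟩]

lemma card_shift (m n : ℕ) (v : Fin m × Fin n) (a : ZMod 3) :
    Nat.card {c : Fin m × Fin n → ZMod 3 // ProperColoring m n c}
      = 3 * Nat.card {c : Fin m × Fin n → ZMod 3 // ProperColoring m n c ∧ c v = a} := by
  have e : {c : Fin m × Fin n → ZMod 3 // ProperColoring m n c}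
      ≃ ZMod 3 × {c : Fin m × Fin n → ZMod 3 // ProperColoring m n c ∧ c v = a} := by
    refine ⟨fun c => (c.1 v, ⟨fun p => c.1 p - c.1 v + a, ?_, by simp⟩),
      fun tc => ⟨fun p => tc.2.1 p + tc.1 - a, ?_⟩, ?_, ?_⟩
    · intro p q hadj h
      exact c.2 p q hadj (by linear_combination h)
    · intro p q hadj h
      exact tc.2.2.1 p q hadj (by linear_combination h)
    · intro c
      apply Subtype.ext
      funext p
      show (c.1 p - c.1 v + a) + c.1 v - a = c.1 p
      ring
    · rintro ⟨t, c', hc', hv⟩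
      refine Prod.ext ?_ ?_
      · show c' v + t - a = t
        rw [hv]; ring
      · apply Subtype.ext
        funext p
        show (c' p + t - a) - (c' v + t - a) + a = c' p
        rw [hv]; ring
  rw [Nat.card_congr e, Nat.card_prod]
  congr 1
  simp [Nat.card_eq_fintype_card]

end Main

/-- for `m, n ≥ 2`, the number of locally flat-foldable MV-assignments of
the `m × n` Miura-ori equals the number of proper 3-colorings of the `m × n` grid graph
in which one fixed vertex `v` is pre-colored (with a fixed color `a`); consequently,
three times the number of locally flat-foldable MV-assignments equals the total number
of proper 3-colorings of `G(m,n)`. -/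
theorem card_flatFoldable_eq_card_precolored {m n : ℕ} (hm : 2 ≤ m) (hn : 2 ≤ n)
    (v : Fin m × Fin n) (a : ZMod 3) :
    Nat.card {μ : Crease m n → ℤ // FlatFoldable μ} =
        Nat.card {c : Fin m × Fin n → ZMod 3 // ProperColoring m n c ∧ c v = a} ∧
    3 * Nat.card {μ : Crease m n → ℤ // FlatFoldable μ} =
        Nat.card {c : Fin m × Fin n → ZMod 3 // ProperColoring m n c} := by
  have hm0 : 0 < m := by omega
  have hn0 : 0 < n := by omega
  have h1 := card_ff_eq hm hn
  have h2 : Nat.card {c : Fin m × Fin n → ZMod 3 // ProperColoring m n c}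
      = 3 * Nat.card {μ : Crease m n → ℤ // FlatFoldable μ} := by
    rw [h1]
    exact card_shift m n (⟨0, hm0⟩, ⟨0, hn0⟩) 0
  have h3 := card_shift m n v a
  have h4 := h2.symm.trans h3
  exact ⟨Nat.eq_of_mul_eq_mul_left (by norm_num) h4, h2.symm⟩

end Miura
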